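/- Let w ∈ FreeGroup (Fin 2) be nontrivial, not a proper power, not primitive (w is not the image of a generator under any automorphism of FreeGroup (Fin 2)), and a C-test word for all free groups of rank ≥ 2. Then the double D(w) admits no surjective group homomorphism onto the free group FreeGroup (Fin 3). -/

import Mathlib

namespace CTW

open FreeGroup Equiv

variable {α : Type} [DecidableEq α]

/-- In a reduced word, adjacent letters never cancel. -/
lemma no_cancel {L : List (α × Bool)} (hred : FreeGroup.reduce L = L) {t : ℕ} {a : α} {b : Bool}
    (h1 : L[t]? = some (a, b)) (h2 : L[t+1]? = some (a, !b)) : False := by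
  have ht1 : t + 1 < L.length := (List.getElem?_eq_some_iff.1 h2).1
  have ht : t < L.length := by omega
  have e1 : L[t] = (a, b) := by
    have := List.getElem?_eq_getElem ht; rw [h1] at this; exact (Option.some_injective _ this).symm
  have e2 : L[t+1] = (a, !b) := by
    have := List.getElem?_eq_getElem ht1; rw [h2] at this; exact (Option.some_injective _ this).symm
  have hdec : L = L.take t ++ (a, b) :: (a, !b) :: L.drop (t+2) := by
    conv_lhs => rw [← List.take_append_drop t L]
    rw [List.drop_eq_getElem_cons ht, e1, List.drop_eq_getElem_cons ht1, e2]
  exact FreeGroup.reduce.not (hred.trans hdec)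

lemma no_cancel' {L : List (α × Bool)} (hred : FreeGroup.reduce L = L) {t : ℕ} {a : α}
    (h1 : L[t]? = some (a, true)) (h2 : L[t+1]? = some (a, false)) : False :=
  no_cancel hred h1 h2

lemma no_cancel'' {L : List (α × Bool)} (hred : FreeGroup.reduce L = L) {t : ℕ} {a : α}
    (h1 : L[t]? = some (a, false)) (h2 : L[t+1]? = some (a, true)) : False :=
  no_cancel hred h1 h2

variable (L : List (α × Bool))

/-- Input constraint for letter `a` at position `j`. -/
abbrev Pp (a : α) (j : ℕ) : Prop := (1 ≤ j ∧ L[j-1]? = some (a, true)) ∨ L[j]? = some (a, false)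

/-- Output constraint for letter `a` at position `j`. -/
abbrev Qq (a : α) (j : ℕ) : Prop := L[j]? = some (a, true) ∨ (1 ≤ j ∧ L[j-1]? = some (a, false))

variable (hred : FreeGroup.reduce L = L)

/-- The partial bijection attached to the letter `a`. -/
noncomputable def eqv (a : α) :
    {j : Fin (L.length + 1) // Pp L a j.val} ≃ {j : Fin (L.length + 1) // Qq L a j.val} where
  toFun := fun ⟨j, hj⟩ =>
    if h : 1 ≤ j.val ∧ L[j.val - 1]? = some (a, true) then
      ⟨⟨j.val - 1, by have := j.isLt; omega⟩, Or.inl h.2⟩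
    else
      have h2 : L[j.val]? = some (a, false) := hj.resolve_left h
      ⟨⟨j.val + 1, by have := (List.getElem?_eq_some_iff.1 h2).1; omega⟩,
        Or.inr ⟨Nat.succ_le_succ (Nat.zero_le _), by simpa using h2⟩⟩
  invFun := fun ⟨j, hj⟩ =>
    if h : L[j.val]? = some (a, true) then
      ⟨⟨j.val + 1, by have := (List.getElem?_eq_some_iff.1 h).1; omega⟩,
        Or.inl ⟨Nat.succ_le_succ (Nat.zero_le _), by simpa using h⟩⟩
    else
      have h2 : 1 ≤ j.val ∧ L[j.val - 1]? = some (a, false) := hj.resolve_left h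
      ⟨⟨j.val - 1, by have := j.isLt; omega⟩, Or.inr h2.2⟩
  left_inv := by
    rintro ⟨j, hj⟩
    by_cases h : 1 ≤ j.val ∧ L[j.val - 1]? = some (a, true)
    · have h1' := h.1
      simp only [dif_pos h]
      have hc : L[(j.val - 1 : ℕ)]? = some (a, true) := h.2
      simp only [dif_pos hc]
      exact Subtype.ext (Fin.ext (by simp; omega))
    · have h2 : L[j.val]? = some (a, false) := hj.resolve_left h
      simp only [dif_neg h]
      have hnot : ¬ L[(j.val + 1 : ℕ)]? = some (a, true) := fun hc =>
        no_cancel'' hred h2 hc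
      simp only [dif_neg hnot]
      exact Subtype.ext (Fin.ext (by simp))
  right_inv := by
    rintro ⟨j, hj⟩
    by_cases h : L[j.val]? = some (a, true)
    · simp only [dif_pos h]
      have hc : 1 ≤ j.val + 1 ∧ L[(j.val + 1 - 1 : ℕ)]? = some (a, true) :=
        ⟨by omega, by simpa using h⟩
      simp only [dif_pos hc]
      exact Subtype.ext (Fin.ext (by simp))
    · have h2 : 1 ≤ j.val ∧ L[j.val - 1]? = some (a, false) := hj.resolve_left h
      have h1' := h2.1
      simp only [dif_neg h]
      have hnot : ¬ (1 ≤ j.val - 1 ∧ L[(j.val - 1 - 1 : ℕ)]? = some (a, true)) := by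
        rintro ⟨hge, hc⟩
        refine no_cancel' hred hc ?_
        have he : j.val - 1 - 1 + 1 = j.val - 1 := by omega
        rw [he]; exact h2.2
      simp only [dif_neg hnot]
      exact Subtype.ext (Fin.ext (by simp; omega))

/-- The permutation attached to the letter `a`. -/
noncomputable def perm (a : α) : Equiv.Perm (Fin (L.length + 1)) :=
  (eqv L hred a).extendSubtype

lemma perm_pos {a : α} {t : ℕ} (ht : L[t]? = some (a, true)) (h1 : t + 1 < L.length + 1) :
    perm L hred a ⟨t + 1, h1⟩ = ⟨t, by omega⟩ := by
  have hp : Pp L a (t+1) := Or.inl ⟨by omega, by simpa using ht⟩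
  rw [perm, Equiv.extendSubtype_apply_of_mem (eqv L hred a) ⟨t+1, h1⟩ hp]
  have hcond : 1 ≤ t + 1 ∧ L[(t + 1 - 1 : ℕ)]? = some (a, true) := ⟨by omega, by simpa using ht⟩
  show ((eqv L hred a) ⟨⟨t+1, h1⟩, hp⟩ : {j : Fin (L.length+1) // Qq L a j.val}).val = _
  simp only [eqv, Equiv.coe_fn_mk, dif_pos hcond]
  exact Fin.ext (by simp)

lemma perm_neg {a : α} {t : ℕ} (ht : L[t]? = some (a, false)) (h1 : t < L.length + 1) :
    perm L hred a ⟨t, h1⟩ = ⟨t + 1, by have := (List.getElem?_eq_some_iff.1 ht).1; omega⟩ := by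
  have hp : Pp L a t := Or.inr ht
  rw [perm, Equiv.extendSubtype_apply_of_mem (eqv L hred a) ⟨t, h1⟩ hp]
  have hcond : ¬ (1 ≤ t ∧ L[(t - 1 : ℕ)]? = some (a, true)) := by
    rintro ⟨hge, hc⟩
    refine no_cancel' hred hc ?_
    have he : t - 1 + 1 = t := by omega
    rw [he]; exact ht
  show ((eqv L hred a) ⟨⟨t, h1⟩, hp⟩ : {j : Fin (L.length+1) // Qq L a j.val}).val = _
  simp only [eqv, Equiv.coe_fn_mk, dif_neg hcond]

lemma eval_drop (d k : ℕ) (h : k + d = L.length) :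
    (((L.drop k).map (fun x => cond x.2 (perm L hred x.1) (perm L hred x.1)⁻¹)).prod)
      ⟨L.length, Nat.lt_succ_self _⟩ = ⟨k, by omega⟩ := by
  induction d generalizing k with
  | zero =>
    have hk : k = L.length := by omega
    subst hk
    rw [List.drop_length]
    simp
  | succ d IH =>
    have hk : k < L.length := by omega
    rw [List.drop_eq_getElem_cons hk, List.map_cons, List.prod_cons]
    have IH' := IH (k+1) (by omega)
    rcases hLk : L[k] with ⟨a, b⟩
    have hget : L[k]? = some (a, b) := by rw [List.getElem?_eq_getElem hk, hLk]
    cases b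
    · dsimp only
      rw [Bool.cond_false, Equiv.Perm.mul_apply, IH']
      have hpn := perm_neg L hred hget (by omega)
      have heq : (⟨k+1, by omega⟩ : Fin (L.length + 1)) = perm L hred a ⟨k, by omega⟩ := hpn.symm
      rw [heq, ← Equiv.Perm.mul_apply, inv_mul_cancel, Equiv.Perm.one_apply]
    · dsimp only
      rw [Bool.cond_true, Equiv.Perm.mul_apply, IH']
      exact perm_pos L hred hget (by omega)

/-- Free groups are residually finite, permutation-group version. -/
theorem exists_perm_hom (g : FreeGroup α) (hg : g ≠ 1) :
    ∃ (m : ℕ) (ψ : FreeGroup α →* Equiv.Perm (Fin m)), ψ g ≠ 1 := by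
  have hred : FreeGroup.reduce g.toWord = g.toWord := FreeGroup.reduce_toWord g
  refine ⟨g.toWord.length + 1, FreeGroup.lift (perm g.toWord hred), ?_⟩
  intro hone
  have hlen : g.toWord.length ≠ 0 := by
    simpa [List.length_eq_zero_iff, FreeGroup.toWord_eq_nil_iff] using hg
  have heval := eval_drop g.toWord hred g.toWord.length 0 (by omega)
  rw [List.drop_zero] at heval
  have key : ∀ (f : α → Equiv.Perm (Fin (g.toWord.length + 1))),
      FreeGroup.lift f g = ((g.toWord.map (fun x => cond x.2 (f x.1) (f x.1)⁻¹)).prod) := by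
    intro f
    have h := FreeGroup.lift_mk (L := g.toWord) (f := f)
    rwa [FreeGroup.mk_toWord] at h
  have hev := key (perm g.toWord hred)
  rw [hone] at hev
  have h2 : (1 : Equiv.Perm (Fin (g.toWord.length + 1))) ⟨g.toWord.length, Nat.lt_succ_self _⟩
      = ⟨0, by omega⟩ := by rw [hev]; exact heval
  have h3 := congrArg Fin.val h2
  simp only [Equiv.Perm.one_apply] at h3
  exact hlen h3

open Function Subgroup Cardinal

/-- Hopf property of the rank-2 free group via counting homomorphisms into finite groups. -/
lemma hopf (f : FreeGroup (Fin 2) →* FreeGroup (Fin 2)) (hf : Surjective f)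
    {u : FreeGroup (Fin 2)} (hu : f u = 1) : u = 1 := by
  by_contra h
  obtain ⟨m, ψ, hψ⟩ := exists_perm_hom u h
  haveI : Finite (FreeGroup (Fin 2) →* Equiv.Perm (Fin m)) :=
    Finite.of_equiv _ (FreeGroup.lift (β := Equiv.Perm (Fin m)))
  have hinj : Injective (fun χ : FreeGroup (Fin 2) →* Equiv.Perm (Fin m) => χ.comp f) := by
    intro χ₁ χ₂ hh
    exact (MonoidHom.cancel_right hf).1 hh
  obtain ⟨χ, hχ⟩ := Finite.injective_iff_surjective.mp hinj ψ
  apply hψ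
  rw [← hχ]
  simp only [MonoidHom.comp_apply, hu]
  exact map_one χ

/-- The subgroup generated by two commuting elements is commutative. -/
lemma closure_pair_comm {G : Type*} [Group G] {x y : G} (h : x * y = y * x) :
    ∀ u ∈ closure ({x, y} : Set G), ∀ v ∈ closure ({x, y} : Set G), u * v = v * u := by
  have hsub : ({x, y} : Set G) ⊆ centralizer {x, y} := by
    rintro z hz
    rw [Set.mem_insert_iff, Set.mem_singleton_iff] at hz
    rw [SetLike.mem_coe, mem_centralizer_iff]
    rintro g hg
    rw [Set.mem_insert_iff, Set.mem_singleton_iff] at hg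
    rcases hz with rfl | rfl <;> rcases hg with rfl | rfl
    · rfl
    · exact h.symm
    · exact h
    · rfl
  have h1 : closure ({x, y} : Set G) ≤ centralizer {x, y} := (closure_le _).2 hsub
  have h2 : ({x, y} : Set G) ⊆ ((centralizer ((closure ({x, y} : Set G) : Subgroup G) : Set G) : Subgroup G) : Set G) := by
    intro z hz
    rw [SetLike.mem_coe, mem_centralizer_iff]
    intro g hg
    have := mem_centralizer_iff.1 (h1 hg) z hz
    exact this.symm
  intro u hu v hv
  have h3 : u ∈ centralizer ((closure ({x, y} : Set G) : Subgroup G) : Set G) := (closure_le _).2 h2 hu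
  exact (mem_centralizer_iff.1 h3 v hv).symm

/-- A commutative group which is free must have a subsingleton of generators. -/
lemma generators_subsingleton_of_comm (G : Type) [Group G] [IsFreeGroup G]
    (hcomm : ∀ u v : G, u * v = v * u) : Subsingleton (IsFreeGroup.Generators G) := by
  by_contra h
  rw [not_subsingleton_iff_nontrivial] at h
  obtain ⟨x, y, hxy⟩ := h.exists_pair_ne
  classical
  set f : IsFreeGroup.Generators G → Equiv.Perm (Fin 3) :=
    fun z => if z = x then Equiv.swap 0 1 else Equiv.swap 1 2 with hf
  set ψ := IsFreeGroup.lift f with hψ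
  have h1 : ψ (IsFreeGroup.of x) = Equiv.swap 0 1 := by
    rw [hψ, IsFreeGroup.lift_of, hf]; simp
  have h2 : ψ (IsFreeGroup.of y) = Equiv.swap 1 2 := by
    rw [hψ, IsFreeGroup.lift_of, hf]; simp [Ne.symm hxy]
  have h3 := congrArg ψ (hcomm (IsFreeGroup.of x) (IsFreeGroup.of y))
  rw [_root_.map_mul, _root_.map_mul, h1, h2] at h3
  have : ¬ (Equiv.swap (0 : Fin 3) 1 * Equiv.swap 1 2 = Equiv.swap 1 2 * Equiv.swap 0 1) := by
    decide
  exact this h3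

/-- A subgroup of a free group whose generators are a subsingleton sits inside
the powers of a single element. -/
lemma subgroup_in_zpowers {γ : Type} (H : Subgroup (FreeGroup γ))
    (hss : Subsingleton (IsFreeGroup.Generators ↥H)) :
    ∃ u : FreeGroup γ, ∀ x ∈ H, x ∈ zpowers u := by
  cases isEmpty_or_nonempty (IsFreeGroup.Generators ↥H) with
  | inl he =>
    refine ⟨1, fun x hx => ?_⟩
    haveI : Subsingleton (FreeGroup (IsFreeGroup.Generators ↥H)) := by
      constructor
      intro p q
      have htop := FreeGroup.closure_range_of (IsFreeGroup.Generators ↥H)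
      rw [Set.range_eq_empty, Subgroup.closure_empty] at htop
      have hp : p ∈ (⊥ : Subgroup (FreeGroup (IsFreeGroup.Generators ↥H))) := by
        rw [htop]; trivial
      have hq : q ∈ (⊥ : Subgroup (FreeGroup (IsFreeGroup.Generators ↥H))) := by
        rw [htop]; trivial
      rw [mem_bot] at hp hq
      rw [hp, hq]
    haveI : Subsingleton ↥H := (IsFreeGroup.toFreeGroup (G := ↥H)).toEquiv.subsingleton
    have hx1 : (⟨x, hx⟩ : ↥H) = (1 : ↥H) := Subsingleton.elim _ _
    have : x = 1 := congrArg Subtype.val hx1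
    rw [this]
    exact one_mem _
  | inr hne =>
    obtain ⟨b0⟩ := hne
    set e := IsFreeGroup.toFreeGroup (G := ↥H) with he
    refine ⟨((e.symm (FreeGroup.of b0) : ↥H) : FreeGroup γ), fun x hx => ?_⟩
    have hz : ∀ g : FreeGroup (IsFreeGroup.Generators ↥H), g ∈ zpowers (FreeGroup.of b0) := by
      intro g
      have htop := FreeGroup.closure_range_of (IsFreeGroup.Generators ↥H)
      have hr : Set.range (FreeGroup.of : IsFreeGroup.Generators ↥H → _) = {FreeGroup.of b0} := by
        ext z
        simp only [Set.mem_range, Set.mem_singleton_iff]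
        constructor
        · rintro ⟨t, rfl⟩; rw [Subsingleton.elim t b0]
        · rintro rfl; exact ⟨b0, rfl⟩
      rw [hr] at htop
      rw [zpowers_eq_closure, htop]
      trivial
    obtain ⟨k, hk⟩ := mem_zpowers_iff.1 (hz (e ⟨x, hx⟩))
    refine mem_zpowers_iff.2 ⟨k, ?_⟩
    have h4 : (e.symm (FreeGroup.of b0)) ^ k = (⟨x, hx⟩ : ↥H) := by
      rw [← map_zpow, hk, MulEquiv.symm_apply_apply]
    calc ((e.symm (FreeGroup.of b0) : ↥H) : FreeGroup γ) ^ k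
        = (((e.symm (FreeGroup.of b0)) ^ k : ↥H) : FreeGroup γ) := by
          rw [SubgroupClass.coe_zpow]
      _ = x := by rw [h4]

/-- The rational abelianization of a free group. -/
noncomputable def abQ (γ : Type) : FreeGroup γ →* Multiplicative (γ →₀ ℚ) :=
  FreeGroup.lift (fun i => Multiplicative.ofAdd (Finsupp.single i 1))

lemma abQ_of (γ : Type) (i : γ) :
    Multiplicative.toAdd (abQ γ (FreeGroup.of i)) = Finsupp.single i (1 : ℚ) := by
  rw [abQ, FreeGroup.lift_apply_of]
  rfl

lemma mem_toSubgroup {A : Type} [AddGroup A] (s : AddSubgroup A) (x : Multiplicative A) :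
    x ∈ AddSubgroup.toSubgroup s ↔ Multiplicative.toAdd x ∈ s := Iff.rfl

lemma abQ_mem_span {γ : Type} {s : Set (FreeGroup γ)} {x : FreeGroup γ}
    (hx : x ∈ Subgroup.closure s) :
    Multiplicative.toAdd (abQ γ x)
      ∈ Submodule.span ℚ (Multiplicative.toAdd '' (⇑(abQ γ) '' s)) := by
  set V := Submodule.span ℚ (Multiplicative.toAdd '' (⇑(abQ γ) '' s)) with hV
  set T : Subgroup (Multiplicative (γ →₀ ℚ)) := AddSubgroup.toSubgroup V.toAddSubgroup with hT
  have h1 : abQ γ x ∈ Subgroup.map (abQ γ) (Subgroup.closure s) := Subgroup.mem_map_of_mem _ hx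
  rw [MonoidHom.map_closure] at h1
  have h2 : Subgroup.closure (⇑(abQ γ) '' s) ≤ T := by
    rw [Subgroup.closure_le]
    intro z hz
    show z ∈ T
    rw [hT, mem_toSubgroup]
    exact Submodule.subset_span (Set.mem_image_of_mem _ hz)
  have h3 := h2 h1
  rwa [hT, mem_toSubgroup] at h3

lemma span_abQ_top {γ : Type} {s : Set (FreeGroup γ)}
    (htop : ∀ x : FreeGroup γ, x ∈ Subgroup.closure s) :
    Submodule.span ℚ (Multiplicative.toAdd '' (⇑(abQ γ) '' s)) = ⊤ := by
  rw [eq_top_iff, ← (Finsupp.basisSingleOne (R := ℚ) (ι := γ)).span_eq, Submodule.span_le]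
  rintro v ⟨i, rfl⟩
  have h5 : (Finsupp.basisSingleOne (R := ℚ) (ι := γ)) i = Finsupp.single i (1:ℚ) :=
    congrFun Finsupp.coe_basisSingleOne i
  rw [h5, ← abQ_of γ i]
  simpa using abQ_mem_span (htop (FreeGroup.of i))

lemma span_two_ne_top {s : Set (Fin 3 →₀ ℚ)} (h : #s ≤ 2) (hs : Submodule.span ℚ s = ⊤) :
    False := by
  have h1 := rank_span_le (R := ℚ) s
  have h2 : Module.rank ℚ (Fin 3 →₀ ℚ) ≤ #s := by
    rw [← rank_top ℚ (Fin 3 →₀ ℚ), ← hs]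
    exact h1
  rw [rank_finsupp_self'] at h2
  have h3 : #(Fin 3) = 3 := by simp
  rw [h3] at h2
  have : (3 : Cardinal) ≤ 2 := h2.trans h
  norm_num at this

lemma card_pair_le {X : Type} (u v : X) : #({u, v} : Set X) ≤ 2 := by
  have h1 : #({u, v} : Set X) ≤ #({v} : Set X) + 1 := Cardinal.mk_insert_le
  rw [Cardinal.mk_singleton] at h1
  exact h1.trans_eq (by norm_num)

lemma image2_card_le {X Y Z : Type} (f : X → Y) (g : Y → Z) (u v : X) :
    #(g '' (f '' ({u, v} : Set X))) ≤ 2 := by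
  refine le_trans (Cardinal.mk_image_le (f := g) (s := f '' ({u, v} : Set X))) ?_
  exact le_trans (Cardinal.mk_image_le (f := f) (s := ({u, v} : Set X))) (card_pair_le u v)

/-- A free group of rank 3 is not generated by two elements. -/
lemma no_two_generators (u v : FreeGroup (Fin 3))
    (htop : ∀ x, x ∈ Subgroup.closure ({u, v} : Set (FreeGroup (Fin 3)))) : False :=
  span_two_ne_top (image2_card_le _ _ u v) (span_abQ_top htop)

/-- A free group of rank 3 is not generated by three elements one of whose powers
lies in the group generated by the other two. -/
lemma no_three_generators_rel (z a b : FreeGroup (Fin 3)) (m : ℤ) (hm : m ≠ 0)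
    (hrel : z ^ m ∈ Subgroup.closure ({a, b} : Set (FreeGroup (Fin 3))))
    (htop : ∀ x, x ∈ Subgroup.closure ({z, a, b} : Set (FreeGroup (Fin 3)))) : False := by
  set S2 : Set (Fin 3 →₀ ℚ) := Multiplicative.toAdd '' (⇑(abQ (Fin 3)) '' ({a, b} : Set _)) with hS2
  have hzm : Multiplicative.toAdd (abQ (Fin 3) (z ^ m)) ∈ Submodule.span ℚ S2 := abQ_mem_span hrel
  have hzm2 : Multiplicative.toAdd (abQ (Fin 3) (z ^ m))
      = (m : ℚ) • Multiplicative.toAdd (abQ (Fin 3) z) := by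
    rw [map_zpow]
    rw [toAdd_zpow]
    rw [Int.cast_smul_eq_zsmul]
  have hvz : Multiplicative.toAdd (abQ (Fin 3) z) ∈ Submodule.span ℚ S2 := by
    have h4 := Submodule.smul_mem _ ((m : ℚ)⁻¹) hzm
    rw [hzm2, smul_smul, inv_mul_cancel₀ (by exact_mod_cast hm : (m : ℚ) ≠ 0), one_smul] at h4
    exact h4
  have hset : Multiplicative.toAdd '' (⇑(abQ (Fin 3)) '' ({z, a, b} : Set _))
      = insert (Multiplicative.toAdd (abQ (Fin 3) z)) S2 := by
    rw [hS2]
    rw [Set.image_insert_eq, Set.image_insert_eq]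
  have htop2 := span_abQ_top htop
  rw [hset, Submodule.span_insert_eq_span hvz] at htop2
  exact span_two_ne_top (image2_card_le _ _ a b) htop2

/-- Two elements of a rank-3 free group satisfying a nontrivial relation `w`
lie in a common cyclic subgroup. -/
lemma pair_in_zpowers {w : FreeGroup (Fin 2)} (hne : w ≠ 1) (A : Fin 2 → FreeGroup (Fin 3))
    (hA : FreeGroup.lift A w = 1) :
    ∃ u, ∀ i, A i ∈ zpowers u := by
  classical
  set f := FreeGroup.lift A with hf
  set H := f.range with hH
  set β := IsFreeGroup.Generators ↥H with hβ
  set e : ↥H ≃* FreeGroup β := IsFreeGroup.toFreeGroup ↥H with he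
  set q : FreeGroup (Fin 2) →* FreeGroup β := e.toMonoidHom.comp f.rangeRestrict with hq
  have hqsurj : Surjective q := e.surjective.comp f.rangeRestrict_surjective
  have hqw : q w = 1 := by
    rw [hq, MonoidHom.comp_apply]
    have : f.rangeRestrict w = 1 := by
      apply Subtype.ext
      simp [hA]
    rw [this, _root_.map_one]
  -- cardinality bound on β
  have hcard : #β ≤ 2 := by
    set S2 : Set (FreeGroup (Fin 2)) := Set.range (FreeGroup.of : Fin 2 → _) with hS2
    have htop : ∀ x : FreeGroup β, x ∈ Subgroup.closure (⇑q '' S2) := by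
      intro x
      have h1 : Subgroup.closure (⇑q '' S2) = Subgroup.map q (Subgroup.closure S2) :=
        (MonoidHom.map_closure _ _).symm
      rw [h1, hS2, FreeGroup.closure_range_of]
      obtain ⟨y, rfl⟩ := hqsurj x
      exact Subgroup.mem_map_of_mem _ trivial
    have hspan := span_abQ_top htop
    have hrank : Module.rank ℚ (β →₀ ℚ) ≤ #(Multiplicative.toAdd '' (⇑(abQ β) '' (⇑q '' S2))) := by
      rw [← rank_top ℚ (β →₀ ℚ), ← hspan]
      exact rank_span_le _
    have hcard2 : #(Multiplicative.toAdd '' (⇑(abQ β) '' (⇑q '' S2))) ≤ 2 := by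
      refine (Cardinal.mk_image_le.trans (Cardinal.mk_image_le.trans
        (Cardinal.mk_image_le.trans ?_)))
      have := Cardinal.mk_range_le (f := (FreeGroup.of : Fin 2 → FreeGroup (Fin 2)))
      refine this.trans ?_
      simp
    rw [rank_finsupp_self'] at hrank
    exact hrank.trans hcard2
  haveI hfin : Finite β := by
    rw [← Cardinal.lt_aleph0_iff_finite]
    exact hcard.trans_lt (by exact Cardinal.nat_lt_aleph0 2)
  haveI := Fintype.ofFinite β
  have hc2 : Fintype.card β ≤ 2 := by
    have := Cardinal.mk_fintype β
    rw [this] at hcard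
    exact_mod_cast hcard
  by_cases hcc : Fintype.card β ≤ 1
  · haveI : Subsingleton β := Fintype.card_le_one_iff_subsingleton.mp hcc
    obtain ⟨u, hu⟩ := subgroup_in_zpowers H (by rw [← hβ]; infer_instance)
    refine ⟨u, fun i => ?_⟩
    apply hu
    rw [hH]
    exact ⟨FreeGroup.of i, by rw [hf, FreeGroup.lift_apply_of]⟩
  · have hcc2 : Fintype.card β = 2 := by omega
    have eqv : β ≃ Fin 2 := Fintype.equivFinOfCardEq hcc2
    have hendo : Surjective ((FreeGroup.freeGroupCongr eqv).toMonoidHom.comp q) :=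
      (FreeGroup.freeGroupCongr eqv).surjective.comp hqsurj
    have := hopf _ hendo (u := w) (by
      rw [MonoidHom.comp_apply, hqw, _root_.map_one])
    exact (hne this).elim

end CTW

/-- `w ∈ FreeGroup (Fin n)` is a C-test word for all free groups of rank ≥ 2. -/
def IsCTestWord {n : ℕ} (w : FreeGroup (Fin n)) : Prop :=
  ∀ (β : Type) [Nontrivial β] (A B : Fin n → FreeGroup β),
    FreeGroup.lift A w = FreeGroup.lift B w → FreeGroup.lift A w ≠ 1 →
      ∃ S : FreeGroup β, ∀ i, B i = S * A i * S⁻¹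

/-- The single defining relator `w(x,y)·w(r,s)⁻¹` of the double `D(w)`. -/
def doubleRels (w : FreeGroup (Fin 2)) : Set (FreeGroup (Fin 2 ⊕ Fin 2)) :=
  {FreeGroup.map Sum.inl w * (FreeGroup.map Sum.inr w)⁻¹}

/-- The double `D(w) = ⟨x, y, r, s ∣ w(x,y) = w(r,s)⟩` of the free group of rank 2
along `w`. -/
abbrev Double (w : FreeGroup (Fin 2)) : Type := PresentedGroup (doubleRels w)

set_option maxHeartbeats 1000000 in
open CTW Subgroup Function in
/-- If `w` is nontrivial, not a proper power, not primitive, and a C-test word, then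
the double `D(w)` does not surject onto a free group of rank 3. -/
theorem double_not_surj_freeGroup_three (w : FreeGroup (Fin 2))
    (hne : w ≠ 1)
    (hpow : ¬ ∃ (z : FreeGroup (Fin 2)) (m : ℤ), 2 ≤ |m| ∧ w = z ^ m)
    (hprim : ¬ ∃ (e : FreeGroup (Fin 2) ≃* FreeGroup (Fin 2)) (i : Fin 2),
      e (FreeGroup.of i) = w)
    (hC : IsCTestWord w) :
    ¬ ∃ φ : Double w →* FreeGroup (Fin 3), Function.Surjective φ := by
  rintro ⟨φ, hφ⟩
  classical
  set ψ : FreeGroup (Fin 2 ⊕ Fin 2) →* FreeGroup (Fin 3) :=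
    φ.comp (PresentedGroup.mk (doubleRels w)) with hψdef
  have hψsurj : Surjective ψ := hφ.comp (PresentedGroup.mk_surjective _)
  set A : Fin 2 → FreeGroup (Fin 3) := fun i => ψ (FreeGroup.of (Sum.inl i)) with hA
  set B : Fin 2 → FreeGroup (Fin 3) := fun i => ψ (FreeGroup.of (Sum.inr i)) with hB
  have hliftA : FreeGroup.lift A = ψ.comp (FreeGroup.map Sum.inl) := by
    apply FreeGroup.ext_hom
    intro i
    rw [FreeGroup.lift_apply_of, MonoidHom.comp_apply, FreeGroup.map.of]
  have hliftB : FreeGroup.lift B = ψ.comp (FreeGroup.map Sum.inr) := by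
    apply FreeGroup.ext_hom
    intro i
    rw [FreeGroup.lift_apply_of, MonoidHom.comp_apply, FreeGroup.map.of]
  have hrel : ψ (FreeGroup.map Sum.inl w * (FreeGroup.map Sum.inr w)⁻¹) = 1 := by
    rw [hψdef, MonoidHom.comp_apply]
    have h1 : (PresentedGroup.mk (doubleRels w))
        (FreeGroup.map Sum.inl w * (FreeGroup.map Sum.inr w)⁻¹) = 1 := by
      apply (QuotientGroup.eq_one_iff _).2
      exact Subgroup.subset_normalClosure rfl
    rw [h1, _root_.map_one]
  have heq : FreeGroup.lift A w = FreeGroup.lift B w := by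
    rw [_root_.map_mul, _root_.map_inv] at hrel
    have h2 := mul_inv_eq_one.1 hrel
    rw [hliftA, hliftB]
    exact h2
  -- generation of the target by the four images
  set Sgen : Set (FreeGroup (Fin 3)) := Set.range (fun s : Fin 2 ⊕ Fin 2 => ψ (FreeGroup.of s))
    with hSgen
  have hgenS : Subgroup.closure Sgen = ⊤ := by
    rw [hSgen]
    have h0 : (fun s : Fin 2 ⊕ Fin 2 => ψ (FreeGroup.of s)) = ⇑ψ ∘ FreeGroup.of := rfl
    rw [h0, Set.range_comp, ← MonoidHom.map_closure, FreeGroup.closure_range_of,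
      ← MonoidHom.range_eq_map]
    exact MonoidHom.range_eq_top.2 hψsurj
  by_cases hval : FreeGroup.lift A w = 1
  · -- both pairs satisfy the relation, hence are cyclic: 2-generation, contradiction
    obtain ⟨u, hu⟩ := pair_in_zpowers hne A hval
    obtain ⟨v, hv⟩ := pair_in_zpowers hne B (heq ▸ hval)
    apply no_two_generators u v
    intro x
    have hle : Subgroup.closure Sgen ≤ Subgroup.closure {u, v} := by
      rw [Subgroup.closure_le]
      rintro _ ⟨(i | i), rfl⟩
      · have h7 : u ∈ Subgroup.closure ({u, v} : Set (FreeGroup (Fin 3))) :=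
          Subgroup.subset_closure (Set.mem_insert _ _)
        exact zpowers_le.2 h7 (hu i)
      · have h7 : v ∈ Subgroup.closure ({u, v} : Set (FreeGroup (Fin 3))) :=
          Subgroup.subset_closure (Set.mem_insert_of_mem _ rfl)
        exact zpowers_le.2 h7 (hv i)
    have hx : x ∈ Subgroup.closure Sgen := by rw [hgenS]; trivial
    exact hle hx
  · -- C-test word case
    obtain ⟨S, hS⟩ := hC (Fin 3) A B heq hval
    set g := FreeGroup.lift A w with hg
    have hconj : FreeGroup.lift B w = S * g * S⁻¹ := by
      have hhom : FreeGroup.lift B = ((MulAut.conj S).toMonoidHom).comp (FreeGroup.lift A) := by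
        apply FreeGroup.ext_hom
        intro i
        rw [FreeGroup.lift_apply_of, MonoidHom.comp_apply, FreeGroup.lift_apply_of, MulEquiv.coe_toMonoidHom,
          MulAut.conj_apply, hS i]
      rw [hhom, MonoidHom.comp_apply, MulEquiv.coe_toMonoidHom, MulAut.conj_apply]
    have hgS : g * S = S * g := by
      have h3 : g = S * g * S⁻¹ := by rw [← hconj, ← heq]
      exact eq_mul_inv_iff_mul_eq.1 h3
    set K := Subgroup.closure ({g, S} : Set (FreeGroup (Fin 3))) with hK
    have hKcomm : ∀ u v : ↥K, u * v = v * u := by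
      rintro ⟨u, hu⟩ ⟨v, hv⟩
      apply Subtype.ext
      exact closure_pair_comm hgS u hu v hv
    have hss := generators_subsingleton_of_comm ↥K hKcomm
    obtain ⟨z, hz⟩ := subgroup_in_zpowers K hss
    obtain ⟨m, hmz⟩ := mem_zpowers_iff.1 (hz g (Subgroup.subset_closure (by simp)))
    obtain ⟨k, hkz⟩ := mem_zpowers_iff.1 (hz S (Subgroup.subset_closure (by simp)))
    have hm0 : m ≠ 0 := by
      rintro rfl
      rw [zpow_zero] at hmz
      exact hval hmz.symm
    apply no_three_generators_rel z (A 0) (A 1) m hm0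
    · rw [hmz]
      have h5 : g ∈ (FreeGroup.lift A).range := ⟨w, rfl⟩
      rw [FreeGroup.range_lift_eq_closure] at h5
      refine Subgroup.closure_mono ?_ h5
      rintro _ ⟨i, rfl⟩
      fin_cases i <;> simp
    · intro x
      have hle : Subgroup.closure Sgen ≤ Subgroup.closure {z, A 0, A 1} := by
        rw [Subgroup.closure_le]
        rintro _ ⟨(i | i), rfl⟩
        · show A i ∈ Subgroup.closure {z, A 0, A 1}
          apply Subgroup.subset_closure
          fin_cases i <;> simp
        · show B i ∈ Subgroup.closure {z, A 0, A 1}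
          rw [hS i, ← hkz]
          have hzmem : z ∈ Subgroup.closure ({z, A 0, A 1} : Set (FreeGroup (Fin 3))) :=
            Subgroup.subset_closure (by simp)
          have hAmem : A i ∈ Subgroup.closure ({z, A 0, A 1} : Set (FreeGroup (Fin 3))) := by
            apply Subgroup.subset_closure
            fin_cases i <;> simp
          exact mul_mem (mul_mem (zpow_mem hzmem k) hAmem) (inv_mem (zpow_mem hzmem k))
      have hx : x ∈ Subgroup.closure Sgen := by rw [hgenS]; trivial
      exact hle hx
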